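/- Let X be a solution of the Multiway Cut instance (G',T,k) constructed from an untangled GFVS instance with fixed labeling φ on Z (where terminals T = { φ(u)·Λ((u,v)) : (u,v) ∈ A(G), u ∈ Z, v ∉ Z } and G' has edges uv for arcs inside V(G)∖Z plus edges gv for g = φ(u)·Λ((u,v))). Define λ on V(G)∖X by λ(v) = φ(v) for v ∈ Z, λ(v) = g if v ∈ V(G)∖Z is reachable from terminal g ∈ T in G'∖X, and λ(v) = 1_Σ otherwise. Then λ is a consistent labeling of (G∖X, Λ) extending φ. -/

import Mathlib

/-- Adjacency of the Multiway Cut graph `G'` built from an untangled instance and a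
fixed labeling `φ` on `Z`: vertices are `V∖Z` plus terminals (group elements),
with `uv` for arcs inside `V∖Z` and `gv` whenever `φ(u)·Λ((u,v)) = g` for some
arc `(u,v)` with `u ∈ Z`, `v ∉ Z`. -/
def mcAdj {V Γ : Type*} [Group Γ] (Arc : V → V → Prop) (Λ : V → V → Γ)
    (Z : Set V) (φ : V → Γ) : (V ⊕ Γ) → (V ⊕ Γ) → Prop
  | Sum.inl u, Sum.inl w => u ∉ Z ∧ w ∉ Z ∧ Arc u w
  | Sum.inl v, Sum.inr g => v ∉ Z ∧ ∃ u ∈ Z, Arc u v ∧ φ u * Λ u v = g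
  | Sum.inr g, Sum.inl v => v ∉ Z ∧ ∃ u ∈ Z, Arc u v ∧ φ u * Λ u v = g
  | Sum.inr _, Sum.inr _ => False

/-- Reachability from `a` to `b` in `G'` after removing the vertex set `X ⊆ V∖Z`. -/
def mcReach {V Γ : Type*} [Group Γ] (Arc : V → V → Prop) (Λ : V → V → Γ)
    (Z : Set V) (φ : V → Γ) (X : Finset V) (a b : V ⊕ Γ) : Prop :=
  ∃ l : List (V ⊕ Γ), l.Chain' (mcAdj Arc Λ Z φ) ∧
    l.head? = some a ∧ l.getLast? = some b ∧ ∀ x ∈ X, Sum.inl x ∉ l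

/-- Terminals of the Multiway Cut instance. -/
def mcTerminals {V Γ : Type*} [Group Γ] (Arc : V → V → Prop) (Λ : V → V → Γ)
    (Z : Set V) (φ : V → Γ) : Set Γ :=
  {g : Γ | ∃ u v, u ∈ Z ∧ v ∉ Z ∧ Arc u v ∧ φ u * Λ u v = g}

/-!
An arc `(u, v)` leaving `Z` makes `v` adjacent to the terminal `φ(u)·Λ((u, v))` in `G'`, so
`λ(v)` is that terminal, which is exactly what consistency asks for. An arc inside `V∖Z`
(labelled `1` by untangledness) is an edge of `G'`, so its endpoints are reached from the same
terminals and get the same label. Arcs inside `Z` are consistent because `φ` is.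
-/

section

variable {V Γ : Type*} [Group Γ] {Arc : V → V → Prop} {Λ : V → V → Γ} {Z : Set V}
  {φ : V → Γ} {X : Finset V}

theorem mcReach.refl_inr (g : Γ) : mcReach Arc Λ Z φ X (Sum.inr g) (Sum.inr g) :=
  ⟨[Sum.inr g], List.isChain_singleton _, rfl, rfl, by simp⟩

theorem mcReach.tail {a b c : V ⊕ Γ} (h : mcReach Arc Λ Z φ X a b)
    (hbc : mcAdj Arc Λ Z φ b c) (hc : ∀ x ∈ X, Sum.inl x ≠ c) :
    mcReach Arc Λ Z φ X a c := by
  obtain ⟨l, hchain, hhead, hlast, hX⟩ := h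
  refine ⟨l ++ [c], ?_, ?_, by simp, ?_⟩
  · rw [List.Chain', List.isChain_append]
    refine ⟨hchain, List.isChain_singleton _, fun x hx y hy => ?_⟩
    rw [hlast, Option.mem_some_iff] at hx
    rw [List.head?_singleton, Option.mem_some_iff] at hy
    exact hx ▸ hy ▸ hbc
  · cases l with
    | nil => simp at hhead
    | cons _ _ => simpa using hhead
  · intro x hx hmem
    rcases List.mem_append.mp hmem with hl | hc'
    · exact hX x hx hl
    · exact hc x hx (List.mem_singleton.mp hc')

theorem mcReach_terminal_of_arc {u v : V} (hu : u ∈ Z) (hv : v ∉ Z) (huv : Arc u v)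
    (hvX : v ∉ X) : mcReach Arc Λ Z φ X (Sum.inr (φ u * Λ u v)) (Sum.inl v) :=
  (mcReach.refl_inr _).tail ⟨hv, u, hu, huv, rfl⟩ fun _ hx h => hvX (Sum.inl_injective h ▸ hx)

theorem mcReach_inl_iff_of_arc (hsymm : ∀ u v, Arc u v → Arc v u) {a : V ⊕ Γ} {u v : V}
    (hu : u ∉ Z) (hv : v ∉ Z) (huv : Arc u v) (huX : u ∉ X) (hvX : v ∉ X) :
    mcReach Arc Λ Z φ X a (Sum.inl u) ↔ mcReach Arc Λ Z φ X a (Sum.inl v) :=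
  ⟨fun h => h.tail ⟨hu, hv, huv⟩ fun _ hx h => hvX (Sum.inl_injective h ▸ hx),
    fun h => h.tail ⟨hv, hu, hsymm u v huv⟩ fun _ hx h => huX (Sum.inl_injective h ▸ hx)⟩

variable {lam : V → Γ}
  (hlamReach : ∀ v, v ∉ Z → v ∉ X → ∀ g ∈ mcTerminals Arc Λ Z φ,
    mcReach Arc Λ Z φ X (Sum.inr g) (Sum.inl v) → lam v = g)

include hlamReach in
theorem lam_eq_of_arc_leaving_Z {u v : V} (hu : u ∈ Z) (hv : v ∉ Z) (huv : Arc u v)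
    (hvX : v ∉ X) : lam v = φ u * Λ u v :=
  hlamReach v hv hvX _ ⟨u, v, hu, hv, huv, rfl⟩ (mcReach_terminal_of_arc hu hv huv hvX)

include hlamReach in
theorem lam_eq_of_arc_outside_Z (hsymm : ∀ u v, Arc u v → Arc v u)
    (hlamOne : ∀ v, v ∉ Z → v ∉ X →
      (¬ ∃ g ∈ mcTerminals Arc Λ Z φ, mcReach Arc Λ Z φ X (Sum.inr g) (Sum.inl v)) →
      lam v = 1)
    {u v : V} (hu : u ∉ Z) (hv : v ∉ Z) (huv : Arc u v) (huX : u ∉ X) (hvX : v ∉ X) :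
    lam v = lam u := by
  have hiff (g : Γ) : mcReach Arc Λ Z φ X (Sum.inr g) (Sum.inl u) ↔
      mcReach Arc Λ Z φ X (Sum.inr g) (Sum.inl v) :=
    mcReach_inl_iff_of_arc hsymm hu hv huv huX hvX
  by_cases hreach : ∃ g ∈ mcTerminals Arc Λ Z φ, mcReach Arc Λ Z φ X (Sum.inr g) (Sum.inl u)
  · obtain ⟨g, hg, hr⟩ := hreach
    rw [hlamReach u hu huX g hg hr, hlamReach v hv hvX g hg ((hiff g).mp hr)]
  · rw [hlamOne u hu huX hreach, hlamOne v hv hvX (by simpa only [hiff] using hreach)]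

end

theorem multiway_cut_gives_consistent_labeling_general {V Γ : Type*}
    [Group Γ]
    (Arc : V → V → Prop) (Λ : V → V → Γ)
    (hsymm : ∀ u v, Arc u v → Arc v u)
    (hlab : ∀ u v, Arc u v → Λ u v = (Λ v u)⁻¹)
    (Z : Set V)
    (huntangled : ∀ u v, Arc u v → u ∉ Z → v ∉ Z → Λ u v = 1)
    (φ : V → Γ)
    (hφ : ∀ u v, u ∈ Z → v ∈ Z → Arc u v → φ v = φ u * Λ u v)
    (X : Finset V)
    (lam : V → Γ)
    (hlamZ : ∀ v ∈ Z, lam v = φ v)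
    (hlamReach : ∀ v, v ∉ Z → v ∉ X → ∀ g ∈ mcTerminals Arc Λ Z φ,
      mcReach Arc Λ Z φ X (Sum.inr g) (Sum.inl v) → lam v = g)
    (hlamOne : ∀ v, v ∉ Z → v ∉ X →
      (¬ ∃ g ∈ mcTerminals Arc Λ Z φ, mcReach Arc Λ Z φ X (Sum.inr g) (Sum.inl v)) →
      lam v = 1) :
    (∀ u v, Arc u v → u ∉ X → v ∉ X → lam v = lam u * Λ u v) ∧
    (∀ z ∈ Z, lam z = φ z) := by
  refine ⟨fun u v huv huX hvX => ?_, hlamZ⟩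
  by_cases hu : u ∈ Z <;> by_cases hv : v ∈ Z
  · rw [hlamZ u hu, hlamZ v hv, hφ u v hu hv huv]
  · rw [lam_eq_of_arc_leaving_Z hlamReach hu hv huv hvX, hlamZ u hu]
  · rw [lam_eq_of_arc_leaving_Z hlamReach hv hu (hsymm u v huv) huX, hlamZ v hv,
      hlab u v huv, mul_inv_cancel_right]
  · rw [lam_eq_of_arc_outside_Z hlamReach hsymm hlamOne hu hv huv huX hvX,
      huntangled u v huv hu hv, mul_one]

/-- Forward direction of the reduction to Multiway Cut: from a multiway cut `X`,
the labeling assigning `φ` on `Z`, the unique reachable terminal on `V∖Z`, and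
`1` on unreachable vertices, is a consistent labeling of `(G∖X,Λ)` extending `φ`. -/
theorem multiway_cut_gives_consistent_labeling {V Γ : Type*}
    [Fintype V] [DecidableEq V] [Group Γ]
    (Arc : V → V → Prop) (Λ : V → V → Γ)
    (hsymm : ∀ u v, Arc u v → Arc v u)
    (hlab : ∀ u v, Arc u v → Λ u v = (Λ v u)⁻¹)
    (Z : Set V)
    (huntangled : ∀ u v, Arc u v → u ∉ Z → v ∉ Z → Λ u v = 1)
    (φ : V → Γ)
    (hφ : ∀ u v, u ∈ Z → v ∈ Z → Arc u v → φ v = φ u * Λ u v)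
    (k : ℕ) (X : Finset V) (hXZ : ∀ x ∈ X, x ∉ Z) (hXk : X.card ≤ k)
    (hsep : ∀ g₁ ∈ mcTerminals Arc Λ Z φ, ∀ g₂ ∈ mcTerminals Arc Λ Z φ, g₁ ≠ g₂ →
      ¬ mcReach Arc Λ Z φ X (Sum.inr g₁) (Sum.inr g₂))
    (lam : V → Γ)
    (hlamZ : ∀ v ∈ Z, lam v = φ v)
    (hlamReach : ∀ v, v ∉ Z → v ∉ X → ∀ g ∈ mcTerminals Arc Λ Z φ,
      mcReach Arc Λ Z φ X (Sum.inr g) (Sum.inl v) → lam v = g)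
    (hlamOne : ∀ v, v ∉ Z → v ∉ X →
      (¬ ∃ g ∈ mcTerminals Arc Λ Z φ, mcReach Arc Λ Z φ X (Sum.inr g) (Sum.inl v)) →
      lam v = 1) :
    (∀ u v, Arc u v → u ∉ X → v ∉ X → lam v = lam u * Λ u v) ∧
    (∀ z ∈ Z, lam z = φ z) :=
  multiway_cut_gives_consistent_labeling_general Arc Λ hsymm hlab Z huntangled φ hφ X lam hlamZ
    hlamReach hlamOne
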